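/- For every X ∈ ℂ and every q ∈ ℂ with |q| < 1, the series ∑_{n≥0} q^{n(n+3)/2}·(X;q)_n/(q;q)_n converges absolutely and satisfies X·∑_{n≥0} q^{n(n+3)/2}·(X;q)_n/(q;q)_n = (−q;q)_∞·[(Xq;q²)_∞ − (X;q²)_∞]. -/

import Mathlib

noncomputable def qPoch (a q : ℂ) (n : ℕ) : ℂ := ∏ k ∈ Finset.range n, (1 - a * q ^ k)

noncomputable def qPochInf (a q : ℂ) : ℂ := ∏' n : ℕ, (1 - a * q ^ n)

/-!
Write `Φ(a, z) = ∑ q^{n(n+1)/2} (a;q)_n z^n / (q;q)_n`, so that the series of the theorem is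
`Φ(X, q)`. Comparing coefficients gives the two contiguous relations
`Φ(a, z) - Φ(a, zq) = (1 - a) zq Φ(aq, zq)` and `Φ(a, z) - Φ(aq, z) = -azq Φ(aq, zq)`.
Together they give `X Φ(X, q) = Φ(X, 1) - (1 - X) Φ(Xq, 1)` and `Φ(a, 1) = (1 - aq) Φ(aq², 1)`.
Iterating the latter and letting `aq^{2N} → 0` gives `Φ(a, 1) = (aq;q²)_∞ Φ(0, 1)`, and the same
iteration of `Φ(0, z) = (1 + zq) Φ(0, zq)` gives Euler's `Φ(0, 1) = (-q;q)_∞`. Finally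
`(X;q²)_∞ = (1 - X) (Xq²;q²)_∞`.
-/

open Filter Topology

lemma Nat.mul_add_three_div_two (n : ℕ) : n * (n + 3) / 2 = n * (n + 1) / 2 + n := by
  rw [show n * (n + 3) = n * (n + 1) + n * 2 by ring, Nat.add_mul_div_right _ _ two_pos]

lemma Nat.succ_mul_succ_add_one_div_two (n : ℕ) :
    (n + 1) * (n + 1 + 1) / 2 = n * (n + 1) / 2 + (n + 1) := by
  rw [show (n + 1) * (n + 1 + 1) = n * (n + 1) + (n + 1) * 2 by ring,
    Nat.add_mul_div_right _ _ two_pos]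

lemma tsum_sub_tsum_eq_mul_tsum {R : Type*} [DivisionRing R] [TopologicalSpace R]
    [IsTopologicalRing R] [T2Space R] {f g h : ℕ → R} (hf : Summable f) (hg : Summable g)
    (h₀ : f 0 = g 0) (c : R) (hsucc : ∀ n, f (n + 1) - g (n + 1) = c * h n) :
    ∑' n, f n - ∑' n, g n = c * ∑' n, h n := by
  rw [← hf.tsum_sub hg, (hf.sub hg).tsum_eq_zero_add, h₀, sub_self, zero_add, ← tsum_mul_left]
  exact tsum_congr hsucc

section QPochhammer

variable {q : ℂ}

@[simp]
lemma qPoch_zero (a q : ℂ) : qPoch a q 0 = 1 := Finset.prod_range_zero _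

lemma qPoch_succ (a q : ℂ) (n : ℕ) : qPoch a q (n + 1) = qPoch a q n * (1 - a * q ^ n) :=
  Finset.prod_range_succ _ _

lemma qPoch_succ' (a q : ℂ) (n : ℕ) : qPoch a q (n + 1) = (1 - a) * qPoch (a * q) q n := by
  simp only [qPoch, Finset.prod_range_succ', pow_zero, mul_one, pow_succ', mul_assoc]
  ring

lemma one_sub_mul_pow_ne_zero (hq : ‖q‖ < 1) (k : ℕ) : 1 - q * q ^ k ≠ 0 := by
  rw [sub_ne_zero, ← pow_succ']
  intro h
  simpa [← norm_pow, ← h] using pow_lt_one₀ (norm_nonneg q) hq k.succ_ne_zero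

lemma qPoch_self_ne_zero (hq : ‖q‖ < 1) (n : ℕ) : qPoch q q n ≠ 0 :=
  Finset.prod_ne_zero_iff.2 fun k _ ↦ one_sub_mul_pow_ne_zero hq k

lemma summable_norm_mul_pow (a : ℂ) (hq : ‖q‖ < 1) : Summable fun n : ℕ ↦ ‖a * q ^ n‖ := by
  simpa [norm_mul, norm_pow] using
    (summable_geometric_of_lt_one (norm_nonneg q) hq).mul_left ‖a‖

lemma multipliable_one_sub_mul_pow (a : ℂ) (hq : ‖q‖ < 1) :
    Multipliable fun n : ℕ ↦ 1 - a * q ^ n := by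
  simpa [sub_eq_add_neg] using multipliable_one_add_of_summable (f := fun n ↦ -(a * q ^ n))
    (by simpa using summable_norm_mul_pow a hq)

lemma tendsto_qPoch (a : ℂ) (hq : ‖q‖ < 1) :
    Tendsto (qPoch a q) atTop (𝓝 (qPochInf a q)) :=
  (multipliable_one_sub_mul_pow a hq).hasProd.tendsto_prod_nat

lemma qPochInf_self_ne_zero (hq : ‖q‖ < 1) : qPochInf q q ≠ 0 := by
  simpa [qPochInf, sub_eq_add_neg] using
    tprod_one_add_ne_zero_of_summable (f := fun n ↦ -(q * q ^ n))
      (by simpa [← sub_eq_add_neg] using one_sub_mul_pow_ne_zero hq)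
      (by simpa using summable_norm_mul_pow q hq)

lemma qPochInf_eq_one_sub_mul (a : ℂ) (hq : ‖q‖ < 1) :
    qPochInf a q = (1 - a) * qPochInf (a * q) q := by
  have hshift : Multipliable fun n : ℕ ↦ 1 - a * q ^ (n + 1) := by
    refine (multipliable_one_sub_mul_pow (a * q) hq).congr fun n ↦ ?_
    rw [pow_succ', mul_assoc]
  rw [qPochInf, tprod_eq_zero_mul' (f := fun n ↦ 1 - a * q ^ n) hshift, qPochInf, pow_zero,
    mul_one]
  congr 1
  exact tprod_congr fun n ↦ by rw [pow_succ', mul_assoc]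

lemma norm_qPoch_le (a : ℂ) {R : ℝ} (ha : ‖a‖ ≤ R) (hq : ‖q‖ < 1) (n : ℕ) :
    ‖qPoch a q n‖ ≤ Real.exp (R / (1 - ‖q‖)) := by
  have hR : 0 ≤ R := (norm_nonneg a).trans ha
  have hgeom := summable_geometric_of_lt_one (norm_nonneg q) hq
  calc ‖qPoch a q n‖ ≤ ∏ k ∈ Finset.range n, (1 + R * ‖q‖ ^ k) := by
        rw [qPoch, norm_prod]
        refine Finset.prod_le_prod (fun _ _ ↦ norm_nonneg _) fun k _ ↦ ?_
        refine (norm_sub_le _ _).trans ?_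
        rw [norm_one, norm_mul, norm_pow]
        gcongr
    _ ≤ Real.exp (∑ k ∈ Finset.range n, R * ‖q‖ ^ k) :=
        Real.prod_one_add_le_exp_sum _ fun k ↦ by positivity
    _ ≤ Real.exp (R / (1 - ‖q‖)) := by
        rw [← Finset.mul_sum, div_eq_mul_inv, ← tsum_geometric_of_lt_one (norm_nonneg q) hq]
        gcongr
        exact hgeom.sum_le_tsum _ fun k _ ↦ by positivity

lemma exists_norm_inv_qPoch_self_le (hq : ‖q‖ < 1) : ∃ M, ∀ n, ‖(qPoch q q n)⁻¹‖ ≤ M := by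
  obtain ⟨M, hM⟩ :=
    ((tendsto_qPoch q hq).inv₀ (qPochInf_self_ne_zero hq)).norm.bddAbove_range
  exact ⟨M, fun n ↦ hM ⟨n, rfl⟩⟩

lemma eq_qPochInf_mul_of_forall_eq {f : ℂ → ℂ} {a c r : ℂ} (hr : ‖r‖ < 1)
    (hf : ∀ b ∈ Metric.closedBall 0 ‖a‖, f b = (1 - b * c) * f (b * r))
    (hcont : ContinuousOn f (Metric.closedBall 0 ‖a‖)) :
    f a = qPochInf (a * c) r * f 0 := by
  have hmem : ∀ N : ℕ, a * r ^ N ∈ Metric.closedBall 0 ‖a‖ := fun N ↦ by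
    rw [mem_closedBall_zero_iff, norm_mul, norm_pow]
    exact mul_le_of_le_one_right (norm_nonneg a) (pow_le_one₀ (norm_nonneg r) hr.le)
  have hiter : ∀ N : ℕ, f a = qPoch (a * c) r N * f (a * r ^ N) := by
    intro N
    induction N with
    | zero => simp
    | succ N ih =>
      rw [ih, hf _ (hmem N), qPoch_succ, pow_succ, ← mul_assoc a]
      ring
  have hlim : Tendsto (fun N ↦ a * r ^ N) atTop (𝓝[Metric.closedBall 0 ‖a‖] 0) :=
    tendsto_nhdsWithin_iff.2
      ⟨by simpa using (tendsto_pow_atTop_nhds_zero_of_norm_lt_one hr).const_mul a,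
        .of_forall hmem⟩
  exact tendsto_nhds_unique (tendsto_const_nhds.congr hiter) <|
    (tendsto_qPoch (a * c) hr).mul <|
      (hcont 0 (Metric.mem_closedBall_self (norm_nonneg a))).tendsto.comp hlim

end QPochhammer

noncomputable def qSeriesTerm (q a z : ℂ) (n : ℕ) : ℂ :=
  q ^ (n * (n + 1) / 2) * qPoch a q n * z ^ n / qPoch q q n

/-- The series of the theorem is `qSeries q X q`, and Euler's series for `(-q;q)_∞` is
`qSeries q 0 1`. -/
noncomputable def qSeries (q a z : ℂ) : ℂ := ∑' n, qSeriesTerm q a z n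

section QSeries

variable {q : ℂ}

lemma qSeriesTerm_zero (q a z : ℂ) : qSeriesTerm q a z 0 = 1 := by
  simp [qSeriesTerm]

lemma norm_qSeriesTerm_le (hq : ‖q‖ < 1) {M : ℝ} (hM : ∀ n, ‖(qPoch q q n)⁻¹‖ ≤ M)
    {a z : ℂ} {R : ℝ} (ha : ‖a‖ ≤ R) (hz : ‖z‖ ≤ 1) (n : ℕ) :
    ‖qSeriesTerm q a z n‖ ≤ Real.exp (R / (1 - ‖q‖)) * M * ‖q‖ ^ n := by
  have hexp : ‖q‖ ^ (n * (n + 1) / 2) ≤ ‖q‖ ^ n :=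
    pow_le_pow_of_le_one (norm_nonneg q) hq.le
      (Nat.le_div_iff_mul_le two_pos |>.2 (by nlinarith [Nat.le_mul_self n]))
  rw [qSeriesTerm, div_eq_mul_inv, norm_mul, norm_mul, norm_mul, norm_pow, norm_pow]
  calc ‖q‖ ^ (n * (n + 1) / 2) * ‖qPoch a q n‖ * ‖z‖ ^ n * ‖(qPoch q q n)⁻¹‖
      ≤ ‖q‖ ^ n * Real.exp (R / (1 - ‖q‖)) * 1 * M := by
        gcongr
        · exact norm_qPoch_le a ha hq n
        · exact pow_le_one₀ (norm_nonneg z) hz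
        · exact hM n
    _ = Real.exp (R / (1 - ‖q‖)) * M * ‖q‖ ^ n := by ring

lemma summable_norm_qSeriesTerm (hq : ‖q‖ < 1) (a : ℂ) {z : ℂ} (hz : ‖z‖ ≤ 1) :
    Summable fun n ↦ ‖qSeriesTerm q a z n‖ := by
  obtain ⟨M, hM⟩ := exists_norm_inv_qPoch_self_le hq
  exact .of_nonneg_of_le (fun _ ↦ norm_nonneg _) (norm_qSeriesTerm_le hq hM le_rfl hz)
    ((summable_geometric_of_lt_one (norm_nonneg q) hq).mul_left _)

lemma continuousOn_qSeries (hq : ‖q‖ < 1) (R : ℝ) :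
    ContinuousOn (fun p : ℂ × ℂ ↦ qSeries q p.1 p.2)
      (Metric.closedBall 0 R ×ˢ Metric.closedBall 0 1) := by
  obtain ⟨M, hM⟩ := exists_norm_inv_qPoch_self_le hq
  refine continuousOn_tsum (fun n ↦ Continuous.continuousOn ?_)
    ((summable_geometric_of_lt_one (norm_nonneg q) hq).mul_left (Real.exp (R / (1 - ‖q‖)) * M))
    fun n p hp ↦ norm_qSeriesTerm_le hq hM (R := R) ?_ ?_ n
  · simp only [qSeriesTerm, qPoch]
    fun_prop
  · simpa using (Set.mem_prod.1 hp).1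
  · simpa using (Set.mem_prod.1 hp).2

lemma qSeries_zero_right (q a : ℂ) : qSeries q a 0 = 1 := by
  rw [qSeries, tsum_eq_single 0 fun n hn ↦ by simp [qSeriesTerm, hn], qSeriesTerm_zero]

lemma qSeries_sub_qSeries_mul_right (hq : ‖q‖ < 1) (a : ℂ) {z : ℂ} (hz : ‖z‖ ≤ 1) :
    qSeries q a z - qSeries q a (z * q) = (1 - a) * z * q * qSeries q (a * q) (z * q) := by
  have hzq : ‖z * q‖ ≤ 1 := by
    rw [norm_mul]
    exact mul_le_one₀ hz (norm_nonneg q) hq.le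
  refine tsum_sub_tsum_eq_mul_tsum (summable_norm_qSeriesTerm hq a hz).of_norm
    (summable_norm_qSeriesTerm hq a hzq).of_norm (by simp [qSeriesTerm_zero]) _ fun n ↦ ?_
  have hpoch := qPoch_self_ne_zero hq n
  have hfactor := one_sub_mul_pow_ne_zero hq n
  simp only [qSeriesTerm]
  rw [Nat.succ_mul_succ_add_one_div_two, qPoch_succ' a, qPoch_succ q q n, pow_add]
  field_simp
  ring

lemma qSeries_sub_qSeries_mul_left (hq : ‖q‖ < 1) (a : ℂ) {z : ℂ} (hz : ‖z‖ ≤ 1) :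
    qSeries q a z - qSeries q (a * q) z = -(a * z * q) * qSeries q (a * q) (z * q) := by
  refine tsum_sub_tsum_eq_mul_tsum (summable_norm_qSeriesTerm hq a hz).of_norm
    (summable_norm_qSeriesTerm hq (a * q) hz).of_norm (by simp [qSeriesTerm_zero]) _ fun n ↦ ?_
  have hpoch := qPoch_self_ne_zero hq n
  have hfactor := one_sub_mul_pow_ne_zero hq n
  simp only [qSeriesTerm]
  rw [Nat.succ_mul_succ_add_one_div_two, qPoch_succ' a, qPoch_succ (a * q) q n,
    qPoch_succ q q n, pow_add]
  field_simp
  ring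

lemma qSeries_zero_left_eq_one_add_mul (hq : ‖q‖ < 1) {z : ℂ} (hz : ‖z‖ ≤ 1) :
    qSeries q 0 z = (1 + z * q) * qSeries q 0 (z * q) := by
  have h := qSeries_sub_qSeries_mul_right hq 0 hz
  rw [zero_mul] at h
  linear_combination h

lemma qSeries_one_right_eq_one_sub_mul (hq : ‖q‖ < 1) (a : ℂ) :
    qSeries q a 1 = (1 - a * q) * qSeries q (a * q ^ 2) 1 := by
  have h₁ := qSeries_sub_qSeries_mul_left hq a (z := 1) (by simp)
  have h₂ := qSeries_sub_qSeries_mul_right hq (a * q) (z := 1) (by simp)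
  have h₃ := qSeries_sub_qSeries_mul_left hq (a * q) (z := 1) (by simp)
  simp only [one_mul, mul_assoc, ← sq] at h₁ h₂ h₃
  linear_combination h₁ + a * q * h₂ + (1 - a * q) * h₃

lemma mul_qSeries_right_self (hq : ‖q‖ < 1) (a : ℂ) :
    a * qSeries q a q = qSeries q a 1 - (1 - a) * qSeries q (a * q) 1 := by
  have hright := qSeries_sub_qSeries_mul_right hq a (z := 1) (by simp)
  have hleft := qSeries_sub_qSeries_mul_left hq a (z := 1) (by simp)
  simp only [one_mul, mul_one] at hright hleft
  linear_combination (-a) * hright - (1 - a) * hleft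

lemma qSeries_zero_one (hq : ‖q‖ < 1) : qSeries q 0 1 = qPochInf (-q) q := by
  have hcont : ContinuousOn (qSeries q 0) (Metric.closedBall 0 ‖(1 : ℂ)‖) :=
    (continuousOn_qSeries hq 0).comp (f := fun z ↦ (0, z)) (by fun_prop)
      fun z hz ↦ by simpa using hz
  have h := eq_qPochInf_mul_of_forall_eq (a := 1) (c := -q) hq
    (fun z hz ↦ by
      rw [mul_neg, sub_neg_eq_add]
      exact qSeries_zero_left_eq_one_add_mul hq (by simpa using hz)) hcont
  rwa [qSeries_zero_right, one_mul, mul_one] at h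

lemma qSeries_one_right (hq : ‖q‖ < 1) (a : ℂ) :
    qSeries q a 1 = qPochInf (a * q) (q ^ 2) * qPochInf (-q) q := by
  have hq₂ : ‖q ^ 2‖ < 1 := by simpa using pow_lt_one₀ (norm_nonneg q) hq two_ne_zero
  have hcont : ContinuousOn (fun b ↦ qSeries q b 1) (Metric.closedBall 0 ‖a‖) :=
    (continuousOn_qSeries hq ‖a‖).comp (f := fun b ↦ (b, 1)) (by fun_prop)
      fun b hb ↦ by simpa using hb
  rw [eq_qPochInf_mul_of_forall_eq (c := q) hq₂
      (fun b _ ↦ qSeries_one_right_eq_one_sub_mul hq b) hcont,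
    qSeries_zero_one hq]

end QSeries

theorem second_heine_type_identity (X q : ℂ) (hq : ‖q‖ < 1) :
    Summable (fun n : ℕ => ‖q ^ (n * (n + 3) / 2) * qPoch X q n / qPoch q q n‖) ∧
    X * (∑' n : ℕ, q ^ (n * (n + 3) / 2) * qPoch X q n / qPoch q q n) =
      qPochInf (-q) q * (qPochInf (X * q) (q ^ 2) - qPochInf X (q ^ 2)) := by
  have hterm : (fun n : ℕ ↦ q ^ (n * (n + 3) / 2) * qPoch X q n / qPoch q q n) =
      qSeriesTerm q X q := by
    funext n
    rw [qSeriesTerm, Nat.mul_add_three_div_two, pow_add]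
    ring
  have hq₂ : ‖q ^ 2‖ < 1 := by simpa using pow_lt_one₀ (norm_nonneg q) hq two_ne_zero
  refine ⟨by simpa only [← hterm] using summable_norm_qSeriesTerm hq X hq.le, ?_⟩
  rw [hterm, ← qSeries, mul_qSeries_right_self hq, qSeries_one_right hq, qSeries_one_right hq,
    qPochInf_eq_one_sub_mul X hq₂, mul_assoc, ← sq]
  ring
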